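/- Let G be a connected graph (with a loop at every vertex), r ≡ 0 (mod 3), r ≥ 6, diam(G) ≥ r. If x, y are vertices with d(x,y) = r, then x is sufficient or y is sufficient. -/

import Mathlib

/-- The ball of radius `r` around `v` (the `r`-th neighbourhood `N^r(v)`). -/
def SimpleGraph.distBall {V : Type*} (G : SimpleGraph V) (r : ℕ) (v : V) : Set V :=
  {u : V | G.dist v u ≤ r}

/-- A vertex is *sufficient* if `|N^r(v)| ≥ (r/3 + 1)·δ`, where `δ = G.minDegree + 1`
is the minimum degree of the graph with a loop at every vertex. -/
def SimpleGraph.Sufficient {V : Type*} [Fintype V] (G : SimpleGraph V)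
    [DecidableRel G.Adj] (r : ℕ) (v : V) : Prop :=
  (r / 3 + 1) * (G.minDegree + 1) ≤ (G.distBall r v).ncard

/-!
Vertices pairwise at distance at least 3 have disjoint closed neighbourhoods, each with at least
`δ` elements, so `c` is sufficient as soon as `r / 3 + 1` such vertices have their closed
neighbourhoods inside `N^r(c)`. Such vertices are found every third step along a geodesic, plus
one extra vertex. If every vertex lies within distance `r` of `x`, the geodesic from `x` to `y`
serves `x`. Otherwise some `z` has `d(x, z) = r + 1`, and according to the value of `d(y, z)`
(at most 2, between 3 and `r - 1`, `r` or `r + 1`, at least `r + 2`) a geodesic from `x` or `y`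
to `y` or `z` serves `y` or `x`.
-/

namespace SimpleGraph

variable {V : Type*} {G : SimpleGraph V}

lemma mem_distBall {r : ℕ} {c v : V} : v ∈ G.distBall r c ↔ G.dist c v ≤ r := Iff.rfl

lemma Walk.dist_getVert_le {u v : V} (p : G.Walk u v) (j : ℕ) : G.dist u (p.getVert j) ≤ j :=
  (dist_le (p.take j)).trans (by simp)

lemma Walk.dist_getVert_le_length_sub {u v : V} (p : G.Walk u v) (j : ℕ) :
    G.dist (p.getVert j) v ≤ p.length - j :=
  (dist_le (p.drop j)).trans (by simp)

lemma Connected.exists_geodesic (hG : G.Connected) (u v : V) :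
    ∃ f : ℕ → V, ∀ j ≤ G.dist u v, G.dist u (f j) = j ∧ G.dist (f j) v = G.dist u v - j := by
  obtain ⟨p, hp⟩ := hG.exists_walk_length_eq_dist u v
  refine ⟨p.getVert, fun j hj => ?_⟩
  have h₁ := p.dist_getVert_le j
  have h₂ := p.dist_getVert_le_length_sub j
  have := hG.dist_triangle (u := u) (v := p.getVert j) (w := v)
  omega

lemma Connected.dist_sub_dist_le (hG : G.Connected) (a u v : V) :
    G.dist a u - G.dist a v ≤ G.dist u v := by
  have := hG.dist_triangle (u := a) (v := v) (w := u)
  rw [dist_comm (u := v)] at this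
  omega

lemma Connected.three_le_dist_of_dist_eq (hG : G.Connected) {a u v : V} {i j o : ℕ}
    (hu : G.dist a u = 3 * i + o) (hv : G.dist a v = 3 * j + o) (hij : i ≠ j) :
    3 ≤ G.dist u v := by
  have huv := hG.dist_sub_dist_le a u v
  have hvu := hG.dist_sub_dist_le a v u
  rw [dist_comm (u := v)] at hvu
  omega

lemma Connected.distBall_subset_distBall (hG : G.Connected) {c u : V} {s r : ℕ}
    (h : G.dist c u + s ≤ r) : G.distBall s u ⊆ G.distBall r c := fun w hw =>
  have := hG.dist_triangle (u := c) (v := u) (w := w)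
  le_trans this (by rw [mem_distBall] at hw; omega)

lemma Connected.disjoint_distBall (hG : G.Connected) {u v : V} {s t : ℕ}
    (h : s + t < G.dist u v) : Disjoint (G.distBall s u) (G.distBall t v) :=
  Set.disjoint_left.2 fun w hu hv => by
    have := hG.dist_triangle (u := u) (v := w) (w := v)
    rw [mem_distBall] at hu hv
    rw [dist_comm] at hv
    omega

variable [Fintype V] [DecidableRel G.Adj]

lemma minDegree_add_one_le_ncard_distBall_one (u : V) :
    G.minDegree + 1 ≤ (G.distBall 1 u).ncard := by
  classical
  have hsub : ↑(insert u (G.neighborFinset u)) ⊆ G.distBall 1 u := by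
    intro w hw
    simp only [Finset.coe_insert, Set.mem_insert_iff, Finset.mem_coe, mem_neighborFinset] at hw
    rcases hw with rfl | hadj
    · simp [mem_distBall]
    · exact (dist_eq_one_iff_adj.2 hadj).le
  calc G.minDegree + 1 ≤ G.degree u + 1 := by grw [G.minDegree_le_degree u]
    _ = (insert u (G.neighborFinset u)).card := by
      rw [Finset.card_insert_of_notMem (by simp), card_neighborFinset_eq_degree]
    _ ≤ (G.distBall 1 u).ncard := by
      rw [← Set.ncard_coe_finset]
      exact Set.ncard_le_ncard hsub

lemma card_mul_le_ncard_distBall {ι : Type*} (t : Finset ι) (F : ι → V) {c : V} {r : ℕ}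
    (hdisj : (t : Set ι).PairwiseDisjoint fun i => G.distBall 1 (F i))
    (hsub : ∀ i ∈ t, G.distBall 1 (F i) ⊆ G.distBall r c) :
    t.card * (G.minDegree + 1) ≤ (G.distBall r c).ncard :=
  calc t.card * (G.minDegree + 1) ≤ ∑ i ∈ t, (G.distBall 1 (F i)).ncard := by
        rw [← smul_eq_mul, ← Finset.sum_const]
        exact Finset.sum_le_sum fun i _ => minDegree_add_one_le_ncard_distBall_one (F i)
    _ = (⋃ i ∈ (t : Set ι), G.distBall 1 (F i)).ncard := by
        rw [t.finite_toSet.ncard_biUnion (fun _ _ => Set.toFinite _) hdisj,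
          finsum_mem_coe_finset]
    _ ≤ (G.distBall r c).ncard := Set.ncard_le_ncard (Set.iUnion₂_subset hsub)

theorem Connected.sufficient_of_separated (hG : G.Connected) {r : ℕ} {c h : V} {g : ℕ → V}
    (hgg : ∀ i < r / 3, ∀ j < r / 3, i ≠ j → 3 ≤ G.dist (g i) (g j))
    (hgh : ∀ i < r / 3, 3 ≤ G.dist (g i) h)
    (hg : ∀ i < r / 3, G.distBall 1 (g i) ⊆ G.distBall r c)
    (hh : G.distBall 1 h ⊆ G.distBall r c) : G.Sufficient r c := by
  let F : Option (Fin (r / 3)) → V := fun o => o.elim h fun i => g i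
  have hdisj : ((Finset.univ : Finset (Option (Fin (r / 3)))) : Set _).PairwiseDisjoint
      fun o => G.distBall 1 (F o) := by
    rintro (_ | i) - (_ | j) - hij
    · exact absurd rfl hij
    · exact (hG.disjoint_distBall (hgh j j.2)).symm
    · exact hG.disjoint_distBall (hgh i i.2)
    · exact hG.disjoint_distBall (hgg i i.2 j j.2 fun hij' => hij (by rw [Fin.ext hij']))
  have hsub : ∀ o ∈ Finset.univ, G.distBall 1 (F o) ⊆ G.distBall r c := by
    rintro (_ | i) -
    exacts [hh, hg i i.2]
  simpa [Sufficient] using card_mul_le_ncard_distBall Finset.univ F hdisj hsub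

theorem Connected.sufficient_of_forall_dist_le (hG : G.Connected) {r : ℕ} {x y : V}
    (hd : G.dist x y = r) (hx : ∀ v, G.dist x v ≤ r) : G.Sufficient r x := by
  obtain ⟨p, hp⟩ := hG.exists_geodesic x y
  rw [hd] at hp
  refine hG.sufficient_of_separated (g := fun i => p (3 * i)) (h := y)
    (fun i hi j hj hij => hG.three_le_dist_of_dist_eq (o := 0) (hp _ (by omega)).1
      (hp _ (by omega)).1 hij)
    (fun i hi => ?_) (fun _ _ w _ => hx w) (fun w _ => hx w)
  have := (hp (3 * i) (by omega)).2
  omega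

section FarVertex

variable {r : ℕ} {x y z : V}

theorem Connected.sufficient_of_dist_le_two (hG : G.Connected) (hr : 0 < r)
    (hd : G.dist x y = r) (hz : G.dist x z = r + 1) (hyz : G.dist y z ≤ 2) :
    G.Sufficient r y := by
  obtain ⟨p, hp⟩ := hG.exists_geodesic x y
  obtain ⟨q, hq⟩ := hG.exists_geodesic x z
  rw [hd] at hp
  rw [hz] at hq
  have hp₁ := hp 1 (by omega)
  refine hG.sufficient_of_separated (g := fun i => q (3 * i + 4)) (h := p 1)
    (fun i hi j hj hij => hG.three_le_dist_of_dist_eq (hq _ (by omega)).1 (hq _ (by omega)).1 hij)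
    (fun i hi => ?_) (fun i hi => hG.distBall_subset_distBall ?_)
    (hG.distBall_subset_distBall (by rw [dist_comm]; omega))
  · have hxq := (hq (3 * i + 4) (by omega)).1
    have := hG.dist_sub_dist_le x (q (3 * i + 4)) (p 1)
    omega
  · have hqz := (hq (3 * i + 4) (by omega)).2
    have := hG.dist_triangle (u := y) (v := z) (w := q (3 * i + 4))
    rw [dist_comm (u := z)] at this
    omega

theorem Connected.sufficient_of_three_le_dist_of_dist_lt (hG : G.Connected) (hr : r % 3 = 0)
    (hd : G.dist x y = r) (hz : G.dist x z = r + 1) (hyz : 3 ≤ G.dist y z)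
    (hyz' : G.dist y z < r) : G.Sufficient r y := by
  obtain ⟨p, hp⟩ := hG.exists_geodesic x y
  rw [hd] at hp
  refine hG.sufficient_of_separated (g := fun i => p (3 * i + 3)) (h := z)
    (fun i hi j hj hij => hG.three_le_dist_of_dist_eq (hp _ (by omega)).1 (hp _ (by omega)).1 hij)
    (fun i hi => ?_) (fun i hi => hG.distBall_subset_distBall ?_)
    (hG.distBall_subset_distBall (by omega))
  · obtain ⟨hxp, hpy⟩ := hp (3 * i + 3) (by omega)
    have hx := hG.dist_sub_dist_le x z (p (3 * i + 3))
    have hy := hG.dist_sub_dist_le y z (p (3 * i + 3))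
    rw [dist_comm (u := y) (v := p _)] at hy
    rw [dist_comm]
    omega
  · have hpy := (hp (3 * i + 3) (by omega)).2
    rw [dist_comm]
    omega

theorem Connected.sufficient_of_le_dist_of_dist_le_succ (hG : G.Connected) (hr : 5 ≤ r)
    (hd : G.dist x y = r) (hz : G.dist x z = r + 1) (hyz : r ≤ G.dist y z)
    (hyz' : G.dist y z ≤ r + 1) : G.Sufficient r y := by
  obtain ⟨p, hp⟩ := hG.exists_geodesic x y
  obtain ⟨q, hq⟩ := hG.exists_geodesic y z
  rw [hd] at hp
  have hp₁ := hp 1 (by omega)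
  refine hG.sufficient_of_separated (g := fun i => q (3 * i + 1)) (h := p 1)
    (fun i hi j hj hij => hG.three_le_dist_of_dist_eq (hq _ (by omega)).1 (hq _ (by omega)).1 hij)
    (fun i hi => ?_) (fun i hi => hG.distBall_subset_distBall ?_)
    (hG.distBall_subset_distBall (by rw [dist_comm]; omega))
  · obtain ⟨hyq, hqz⟩ := hq (3 * i + 1) (by omega)
    have hp₁q := hG.dist_sub_dist_le x (q (3 * i + 1)) (p 1)
    have hxy := hG.dist_sub_dist_le x y (q (3 * i + 1))
    have hxz := hG.dist_sub_dist_le x z (q (3 * i + 1))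
    rw [dist_comm (u := z)] at hxz
    omega
  · have hyq := (hq (3 * i + 1) (by omega)).1
    omega

theorem Connected.sufficient_of_add_two_le_dist (hG : G.Connected) (hr : 5 ≤ r)
    (hd : G.dist x y = r) (hz : G.dist x z = r + 1) (hyz : r + 2 ≤ G.dist y z) :
    G.Sufficient r x := by
  obtain ⟨p, hp⟩ := hG.exists_geodesic x y
  obtain ⟨q, hq⟩ := hG.exists_geodesic x z
  rw [hd] at hp
  rw [hz] at hq
  have hpr := hp (r - 1) (by omega)
  refine hG.sufficient_of_separated (g := fun i => q (3 * i + 1)) (h := p (r - 1))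
    (fun i hi j hj hij => hG.three_le_dist_of_dist_eq (hq _ (by omega)).1 (hq _ (by omega)).1 hij)
    (fun i hi => ?_) (fun i hi => hG.distBall_subset_distBall ?_)
    (hG.distBall_subset_distBall (by omega))
  · obtain ⟨hxq, hqz⟩ := hq (3 * i + 1) (by omega)
    have hqp := hG.dist_sub_dist_le y (q (3 * i + 1)) (p (r - 1))
    have hyx := hG.dist_sub_dist_le y x (q (3 * i + 1))
    have hyz := hG.dist_sub_dist_le y z (q (3 * i + 1))
    rw [dist_comm (u := z)] at hyz
    rw [dist_comm (u := y) (v := x), hd] at hyx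
    rw [dist_comm (u := y) (v := p _)] at hqp
    omega
  · have hxq := (hq (3 * i + 1) (by omega)).1
    omega

end FarVertex

end SimpleGraph

theorem edge_growth_distance_r_sufficient_general {V : Type*} [Fintype V]
    (G : SimpleGraph V) [DecidableRel G.Adj] (hG : G.Connected)
    (r : ℕ) (hr3 : r % 3 = 0) (hr : 6 ≤ r)
    (x y : V) (hd : G.dist x y = r) :
    G.Sufficient r x ∨ G.Sufficient r y := by
  by_cases hecc : ∀ v, G.dist x v ≤ r
  · exact .inl (hG.sufficient_of_forall_dist_le hd hecc)
  obtain ⟨v, hv⟩ := not_forall.1 hecc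
  obtain ⟨f, hf⟩ := hG.exists_geodesic x v
  obtain ⟨z, hz⟩ : ∃ z, G.dist x z = r + 1 := ⟨f (r + 1), (hf (r + 1) (by omega)).1⟩
  rcases le_or_gt (G.dist y z) 2 with h₁ | h₁
  · exact .inr (hG.sufficient_of_dist_le_two (by omega) hd hz h₁)
  rcases lt_or_ge (G.dist y z) r with h₂ | h₂
  · exact .inr (hG.sufficient_of_three_le_dist_of_dist_lt hr3 hd hz h₁ h₂)
  rcases le_or_gt (G.dist y z) (r + 1) with h₃ | h₃
  · exact .inr (hG.sufficient_of_le_dist_of_dist_le_succ (by omega) hd hz h₂ h₃)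
  · exact .inl (hG.sufficient_of_add_two_le_dist (by omega) hd hz h₃)

/-- if `r ≡ 0 (mod 3)`, `r ≥ 6`, `diam(G) ≥ r` and `d(x,y) = r`, then
`x` or `y` is sufficient. -/
theorem edge_growth_distance_r_sufficient {V : Type*} [Fintype V]
    (G : SimpleGraph V) [DecidableRel G.Adj] (hG : G.Connected)
    (r : ℕ) (hr3 : r % 3 = 0) (hr : 6 ≤ r)
    (hdiam : ∃ u w : V, r ≤ G.dist u w)
    (x y : V) (hd : G.dist x y = r) :
    G.Sufficient r x ∨ G.Sufficient r y :=
  edge_growth_distance_r_sufficient_general G hG r hr3 hr x y hd
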